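/- Let Ω = {0,1,…,9}, let Ψ : Ω^ℕ → ℝ be defined by Ψ((a_j)_{j≥1}) = Σ_{j=1}^∞ a_j·10^{-j}, and let 𝒟 denote the product σ-algebra on Ω^ℕ (where Ω carries the σ-algebra of all subsets). Then the family of image sets {Ψ(A) : A ∈ 𝒟} is exactly the Borel σ-algebra of [0,1]; in particular, the image of every product-measurable subset of Ω^ℕ under Ψ is a Borel subset of [0,1], and every Borel subset of [0,1] arises as such an image. -/

import Mathlib

/-!
`Ψ` is `Real.ofDigits` in base ten, a continuous surjection of the Polish space `(Fin 10)^ℕ`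
onto `[0,1]`. Off the countable set of sequences ending in `999…` it strictly preserves the
lexicographic order, so it is injective there. The Lusin–Souslin theorem then makes images of
measurable sets Borel, the exceptional sequences contributing only a countable set; conversely
a Borel `s ⊆ [0,1]` is the image of its own preimage, which is measurable by continuity.
-/

open MeasureTheory

noncomputable def Psi : (ℕ → Fin 10) → ℝ :=
  fun a => ∑' j : ℕ, (a j : ℝ) / 10 ^ (j + 1)

open Filter

theorem countable_setOf_eventually_eq {α : Type*} [Countable α] (c : α) :
    {f : ℕ → α | ∀ᶠ i in atTop, f i = c}.Countable := by
  refine (Set.countable_range fun l : List α => fun i => l.getD i c).mono ?_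
  intro f hf
  obtain ⟨N, hN⟩ := eventually_atTop.mp hf
  refine ⟨(List.range N).map f, funext fun i => ?_⟩
  by_cases hi : i < N
  · simp [hi]
  · simp [hi, hN i (not_lt.mp hi)]

theorem MeasurableSet.image_of_continuous_of_injOn_compl_countable
    {X Y : Type*} [TopologicalSpace X] [PolishSpace X] [MeasurableSpace X] [BorelSpace X]
    [TopologicalSpace Y] [T2Space Y] [MeasurableSpace Y] [OpensMeasurableSpace Y]
    {f : X → Y} {s t : Set X} (hs : MeasurableSet s) (hf : Continuous f) (ht : t.Countable)
    (hinj : Set.InjOn f tᶜ) : MeasurableSet (f '' s) := by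
  rw [← Set.sdiff_union_inter s t, Set.image_union]
  exact (hs.diff ht.measurableSet).image_of_continuousOn_injOn hf.continuousOn
      (hinj.mono (Set.sdiff_subset_compl s t)) |>.union
    ((ht.mono Set.inter_subset_right).image f).measurableSet

namespace Real

variable {n : ℕ} [NeZero n]

theorem ofDigits_lt_one {a : ℕ → Fin (n + 1)} {i : ℕ} (hi : a i ≠ Fin.last n) :
    ofDigits a < 1 := by
  rw [← ofDigits_const_last_eq_one n]
  refine Summable.tsum_lt_tsum (i := i) (fun j => ?_) ?_ summable_ofDigitsTerm
    summable_ofDigitsTerm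
  · unfold ofDigitsTerm; gcongr; exact Fin.le_last _
  · unfold ofDigitsTerm; gcongr; exact Fin.lt_last_iff_ne_last.mpr hi

/-- The tail after the first differing digit is worth strictly less than one unit of that
digit, unless it is `(n)(n)(n)…`. -/
theorem ofDigits_lt_ofDigits {a c : ℕ → Fin (n + 1)}
    (ha : ¬∀ᶠ i in atTop, a i = Fin.last n) (hac : toLex a < toLex c) :
    ofDigits a < ofDigits c := by
  obtain ⟨k, hhead, hk⟩ := hac
  obtain ⟨i, hi, hki⟩ :=
    ((not_eventually.mp ha).and_eventually (eventually_gt_atTop k)).exists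
  set B : ℝ := ((n + 1 : ℕ) : ℝ) ^ (k + 1)
  have htail : ofDigits (fun j => a (j + (k + 1))) < 1 :=
    ofDigits_lt_one (i := i - (k + 1)) (by rwa [Nat.sub_add_cancel hki])
  have hdigit : ofDigitsTerm a k + B⁻¹ ≤ ofDigitsTerm c k := by
    have : (a k : ℝ) + 1 ≤ c k := by exact_mod_cast Fin.lt_def.mp hk
    calc ofDigitsTerm a k + B⁻¹ = ((a k : ℝ) + 1) * B⁻¹ := by unfold ofDigitsTerm; ring
      _ ≤ ofDigitsTerm c k := by unfold ofDigitsTerm; gcongr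
  have hsum : ∑ j ∈ Finset.range k, ofDigitsTerm a j = ∑ j ∈ Finset.range k, ofDigitsTerm c j :=
    Finset.sum_congr rfl fun j hj => by
      have : a j = c j := hhead j (Finset.mem_range.mp hj)
      rw [ofDigitsTerm, ofDigitsTerm, this]
  rw [ofDigits_eq_sum_add_ofDigits a (k + 1), ofDigits_eq_sum_add_ofDigits c (k + 1),
    Finset.sum_range_succ, Finset.sum_range_succ, hsum]
  have hB : 0 < B⁻¹ := by positivity
  have := mul_lt_of_lt_one_right hB htail
  have := mul_nonneg hB.le (ofDigits_nonneg fun j => c (j + (k + 1)))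
  linarith

theorem ofDigits_injOn :
    Set.InjOn ofDigits {a : ℕ → Fin (n + 1) | ∀ᶠ i in atTop, a i = Fin.last n}ᶜ := by
  intro a ha c hc h
  by_contra hne
  rcases lt_or_gt_of_ne (toLex.injective.ne hne) with hlt | hlt
  · exact (ofDigits_lt_ofDigits ha hlt).ne h
  · exact (ofDigits_lt_ofDigits hc hlt).ne' h

end Real

theorem psi_eq_ofDigits : Psi = Real.ofDigits := by
  funext a
  simp [Psi, Real.ofDigits, Real.ofDigitsTerm, div_eq_mul_inv]

/-- the family of image sets `{Ψ(A) : A ∈ 𝒟}`, where `𝒟` is the product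
σ-algebra on `(Fin 10)^ℕ` (with `Fin 10` carrying the σ-algebra of all subsets), is
exactly the Borel σ-algebra of `[0,1]` (the trace on `[0,1]` of the Borel σ-algebra of
`ℝ`): the image of every product-measurable set is a Borel subset of `[0,1]`, and every
Borel subset of `[0,1]` arises as such an image.  A subset `s ⊆ [0,1]` corresponds to
the image `Ψ(A)` when `Subtype.val '' s = Ψ '' A`. -/
theorem images_of_measurable_eq_borel :
    {s : Set (Set.Icc (0 : ℝ) 1) | ∃ A : Set (ℕ → Fin 10),
        MeasurableSet A ∧ Subtype.val '' s = Psi '' A}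
      = {s : Set (Set.Icc (0 : ℝ) 1) | MeasurableSet s} := by
  have hval : MeasurableEmbedding (Subtype.val : Set.Icc (0 : ℝ) 1 → ℝ) :=
    .subtype_coe measurableSet_Icc
  have : PolishSpace (ℕ → Fin 10) := {}
  ext s
  simp only [Set.mem_ofPred_eq, ← hval.measurableSet_image, psi_eq_ofDigits]
  constructor
  · rintro ⟨A, hA, hs⟩
    rw [hs]
    exact hA.image_of_continuous_of_injOn_compl_countable Real.continuous_ofDigits
      (countable_setOf_eventually_eq _) Real.ofDigits_injOn
  · intro hs
    refine ⟨Real.ofDigits ⁻¹' (Subtype.val '' s), Real.continuous_ofDigits.measurable hs, ?_⟩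
    refine (Set.image_preimage_eq_of_subset ?_).symm
    simpa using (Subtype.coe_image_subset _ s).trans (Real.ofDigits_SurjOn (by norm_num))
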